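/- arXiv:2111.05201 — 3 statements merged into one kernel-verified Lean document; each statement's English description precedes it below -/
import Mathlib

section
/- Let γ := α(τ−1) < 1. Almost surely, for all N large enough: (i) the simplified graph \overline{G}_N is connected, and (ii) every edge of \overline{G}_N is also an edge of G_N, i.e. E(\overline{G}_N) ⊆ E(G_N). -/
open MeasureTheory ProbabilityTheory Real Filter
open scoped ENNReal Classical

noncomputable section

/-- Torus distance on `Fin N`: `min(|x-y|, N-|x-y|)`. -/
def torusDist (N : ℕ) (x y : Fin N) : ℕ :=
  min (Nat.dist x.val y.val) (N - Nat.dist x.val y.val)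

/-- The scale-free percolation graph on the torus `Fin N`, given the realized
weights `w` and uniform variables `u` (one per unordered pair): vertices at torus
distance `1` are always adjacent, and vertices at torus distance `≥ 2` are adjacent
iff the corresponding uniform variable does not exceed `1 - exp(-w x * w y / ‖x-y‖^α)`. -/
def sfpGraph (α : ℝ) (N : ℕ) (w : Fin N → ℝ) (u : Sym2 (Fin N) → ℝ) :
    SimpleGraph (Fin N) :=
  SimpleGraph.fromRel (fun x y =>
    torusDist N x y = 1 ∨
      (2 ≤ torusDist N x y ∧
        u s(x, y) ≤ 1 - Real.exp (-(w x * w y) * ((torusDist N x y : ℝ) ^ α)⁻¹)))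

/-- `μ` is the Pareto law with tail exponent `τ - 1`:
`μ {w ≥ t} = t^{-(τ-1)}` for `t ≥ 1` and `μ {w < 1} = 0`. -/
def IsParetoLaw (τ : ℝ) (μ : Measure ℝ) : Prop :=
  IsProbabilityMeasure μ ∧
    (∀ t : ℝ, 1 ≤ t → μ {w : ℝ | t ≤ w} = ENNReal.ofReal (t ^ (-(τ - 1)))) ∧
    μ {w : ℝ | w < 1} = 0

/-- The randomness driving a scale-free percolation graph on `Fin K` with parameters
`a` (distance exponent) and `t` (so weights are Pareto with exponent `t-1`):
i.i.d. Pareto weights, i.i.d. uniform-[0,1] pair variables, all jointly independent. -/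
structure SFPData (a t : ℝ) (K : ℕ) {Ω : Type*} [MeasurableSpace Ω] (P : Measure Ω) where
  W : Fin K → Ω → ℝ
  U : Sym2 (Fin K) → Ω → ℝ
  indep : iIndepFun (Sum.elim W U) P
  paretoW : ∀ x : Fin K, IsParetoLaw t (P.map (W x))
  uniformU : ∀ e : Sym2 (Fin K), P.map (U e) = volume.restrict (Set.Icc (0 : ℝ) 1)

/-- The scale-free percolation graph realized at `ω`. -/
def SFPData.graph {a t : ℝ} {K : ℕ} {Ω : Type*} [MeasurableSpace Ω] {P : Measure Ω}
    (D : SFPData a t K P) (ω : Ω) : SimpleGraph (Fin K) :=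
  sfpGraph a K (fun x => D.W x ω) (fun e => D.U e ω)

/-- A family, over all sizes `N`, of scale-free percolation graphs with parameters
`α, τ`, realized on a common probability space. -/
def SFPModel (α τ : ℝ) {Ω : Type*} [MeasurableSpace Ω] (P : Measure Ω) : Type _ :=
  ∀ N : ℕ, SFPData α τ N P

/-- The SFP graph `G_N` realized at `ω`. -/
def SFPModel.graph {α τ : ℝ} {Ω : Type*} [MeasurableSpace Ω] {P : Measure Ω}
    (M : SFPModel α τ P) (N : ℕ) (ω : Ω) : SimpleGraph (Fin N) :=
  (M N).graph ω

/-- The degree of a vertex. -/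
def deg {V : Type*} (G : SimpleGraph V) (x : V) : ℕ := Nat.card {y // G.Adj x y}

/-- The total degree (twice the number of edges). -/
def totalDeg {N : ℕ} (G : SimpleGraph (Fin N)) : ℕ := ∑ x, deg G x

/-- The number of edges. -/
def edgeCount {V : Type*} (G : SimpleGraph V) : ℕ := Nat.card G.edgeSet

/-- Transition matrix of the lazy simple random walk on a graph. -/
def lazyStep {N : ℕ} (G : SimpleGraph (Fin N)) : Matrix (Fin N) (Fin N) ℝ :=
  Matrix.of fun x y =>
    if x = y then 1 / 2 else if G.Adj x y then 1 / (2 * deg G x) else 0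

/-- Stationary distribution of the lazy simple random walk. -/
def statDist {N : ℕ} (G : SimpleGraph (Fin N)) (x : Fin N) : ℝ :=
  (deg G x : ℝ) / (totalDeg G : ℝ)

/-- Worst-case total variation distance to stationarity at time `n`. -/
def tvDist {N : ℕ} (G : SimpleGraph (Fin N)) (n : ℕ) : ℝ :=
  ⨆ x : Fin N, (1 / 2) * ∑ y, |((lazyStep G ^ n) x y) - statDist G y|

/-- Mixing time of the lazy simple random walk. -/
def mixingTime {N : ℕ} (G : SimpleGraph (Fin N)) : ℕ :=
  sInf {n : ℕ | tvDist G n < 1 / 4}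


/-- The simplified graph: `x ≠ y` are adjacent iff `W_x W_y ≥ N^α (log N)²`. -/
def simplifiedGraph (α : ℝ) (N : ℕ) (w : Fin N → ℝ) : SimpleGraph (Fin N) :=
  SimpleGraph.fromRel (fun x y => (N : ℝ) ^ α * Real.log N ^ 2 ≤ w x * w y)

/-- The simplified graph `\overline{G}_N` realized at `ω` (built from the same
weights as `G_N`). -/
def SFPModel.sgraph {α τ : ℝ} {Ω : Type*} [MeasurableSpace Ω] {P : Measure Ω}
    (M : SFPModel α τ P) (N : ℕ) (ω : Ω) : SimpleGraph (Fin N) :=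
  simplifiedGraph α N (fun x => (M N).W x ω)

/-!
Borel–Cantelli. Put `c_N = N^α (log N)²`. All weights are at least `1`, so a vertex of
weight at least `c_N` is adjacent in `\overline{G}_N` to every other vertex, which makes
`\overline{G}_N` connected. An edge `xy` of `\overline{G}_N` has
`W_x W_y / ‖x - y‖^α ≥ W_x W_y / N^α ≥ (log N)²`, so it is an edge of `G_N` as soon as every
uniform variable is at most `1 - exp(-(log N)²)`. By independence, no weight reaches `c_N`
with probability `(1 - c_N^{-(τ-1)})^N ≤ exp(-N^{1-γ} (log N)^{-2(τ-1)})`, and by a union bound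
some uniform variable is too large with probability at most `N² exp(-(log N)²)`. Since `γ < 1`
both are `O(N^{-2})`, hence summable.
-/

lemma ae_eventually_notMem_of_summable {Ω : Type*} [MeasurableSpace Ω] {μ : Measure Ω}
    [IsFiniteMeasure μ] {s : ℕ → Set Ω} {g : ℕ → ℝ} (hg : Summable g)
    (hs : ∀ᶠ n in atTop, μ.real (s n) ≤ g n) :
    ∀ᵐ ω ∂μ, ∀ᶠ n in atTop, ω ∉ s n := by
  have hsum : Summable fun n => μ.real (s n) := hg.of_norm_bounded_eventually_nat <| by
    filter_upwards [hs] with n hn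
    rwa [Real.norm_of_nonneg measureReal_nonneg]
  refine ae_eventually_notMem (ne_top_of_le_ne_top
    (ENNReal.ofReal_ne_top (r := ∑' n, μ.real (s n))) ?_)
  rw [ENNReal.ofReal_tsum_of_nonneg (fun _ => measureReal_nonneg) hsum]
  exact ENNReal.tsum_le_tsum fun n => (ofReal_measureReal).ge

lemma card_sym2_fin_le (N : ℕ) : Fintype.card (Sym2 (Fin N)) ≤ N ^ 2 := by
  simpa [sq] using Fintype.card_le_of_surjective _ (Sym2.mk_surjective (α := Fin N))

lemma summable_exp_neg_of_eventually_two_mul_log_le {f : ℕ → ℝ}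
    (hf : ∀ᶠ n : ℕ in atTop, 2 * Real.log n ≤ f n) : Summable fun n => exp (-f n) := by
  refine (summable_one_div_nat_pow.2 one_lt_two).of_norm_bounded_eventually_nat ?_
  filter_upwards [hf, eventually_gt_atTop 0] with n hn hn0
  have hn0 : (0 : ℝ) < n := by exact_mod_cast hn0
  calc ‖exp (-f n)‖ = exp (-f n) := Real.norm_of_nonneg (exp_pos _).le
    _ ≤ exp (-(2 * Real.log n)) := exp_le_exp.2 (neg_le_neg hn)
    _ = 1 / (n : ℝ) ^ 2 := by
        rw [exp_neg, ← Real.log_rpow hn0, exp_log (by positivity), one_div, rpow_two]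

lemma eventually_two_mul_log_le_rpow_div (r : ℝ) {s : ℝ} (hs : 0 < s) :
    ∀ᶠ x : ℝ in atTop, 2 * Real.log x ≤ x ^ s / Real.log x ^ r := by
  filter_upwards [(isLittleO_log_rpow_rpow_atTop (1 + r) hs).bound one_half_pos,
    tendsto_log_atTop.eventually_gt_atTop 0, eventually_gt_atTop 0] with x hx hL hx0
  rw [Real.norm_of_nonneg (rpow_nonneg hL.le _), Real.norm_of_nonneg (rpow_nonneg hx0.le _),
    rpow_add hL, rpow_one] at hx
  rw [le_div_iff₀ (rpow_pos_of_pos hL _)]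
  linarith

lemma mul_rpow_mul_log_sq_rpow_neg {x : ℝ} (hx : 0 < x) (hL : 0 < Real.log x) (α β : ℝ) :
    x * (x ^ α * Real.log x ^ 2) ^ (-β) = x ^ (1 - α * β) / Real.log x ^ (2 * β) := by
  rw [mul_rpow (rpow_nonneg hx.le _) (sq_nonneg _), ← rpow_mul hx.le, ← rpow_natCast,
    ← rpow_mul hL.le, div_eq_mul_inv, ← rpow_neg hL.le, ← mul_assoc, sub_eq_add_neg,
    rpow_add hx, rpow_one]
  push_cast
  ring_nf

lemma summable_exp_neg_mul_rpow_mul_log_sq_rpow_neg {α β : ℝ} (h : α * β < 1) :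
    Summable fun N : ℕ => exp (-(N * ((N : ℝ) ^ α * Real.log N ^ 2) ^ (-β))) := by
  refine summable_exp_neg_of_eventually_two_mul_log_le ?_
  have hx := eventually_two_mul_log_le_rpow_div (2 * β) (sub_pos.2 h)
  filter_upwards [tendsto_natCast_atTop_atTop.eventually (hx.and
    ((tendsto_log_atTop.eventually_gt_atTop 0).and (eventually_gt_atTop 0)))]
    with N ⟨hN, hL, hN0⟩
  rwa [mul_rpow_mul_log_sq_rpow_neg hN0 hL]

lemma summable_card_sym2_mul_exp_neg_log_sq :
    Summable fun N : ℕ => (Fintype.card (Sym2 (Fin N)) : ℝ) * exp (-(Real.log N ^ 2)) := by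
  have hsum := summable_exp_neg_of_eventually_two_mul_log_le (f := fun N =>
    Real.log N ^ 2 - 2 * Real.log N) <| by
    filter_upwards [tendsto_natCast_atTop_atTop.eventually
      (tendsto_log_atTop.eventually_ge_atTop 4)] with N hN
    nlinarith
  refine hsum.of_norm_bounded_eventually_nat ?_
  filter_upwards [eventually_gt_atTop 0] with N hN0
  have hN0 : (0 : ℝ) < N := by exact_mod_cast hN0
  rw [Real.norm_of_nonneg (by positivity), neg_sub, sub_eq_neg_add, exp_add,
    ← Real.log_rpow hN0, exp_log (by positivity), rpow_two, mul_comm (exp _)]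
  gcongr
  exact_mod_cast card_sym2_fin_le N

lemma one_le_torusDist {N : ℕ} {x y : Fin N} (h : x ≠ y) : 1 ≤ torusDist N x y := by
  have hxy : x.val ≠ y.val := Fin.val_ne_of_ne h
  have := x.isLt
  have := y.isLt
  simp only [torusDist, Nat.dist]
  omega

lemma torusDist_le (N : ℕ) (x y : Fin N) : torusDist N x y ≤ N :=
  (min_le_right _ _).trans (Nat.sub_le _ _)

lemma simplifiedGraph_connected_of_hub {α : ℝ} {N : ℕ} {w : Fin N → ℝ} (hw : ∀ x, 1 ≤ w x)
    {h : Fin N} (hh : (N : ℝ) ^ α * Real.log N ^ 2 ≤ w h) :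
    (simplifiedGraph α N w).Connected := by
  have hadj : ∀ x, x ≠ h → (simplifiedGraph α N w).Adj x h := fun x hx =>
    (SimpleGraph.fromRel_adj _ _ _).2 ⟨hx, Or.inl <| hh.trans <| by
      nlinarith [hw x, hw h]⟩
  refine (SimpleGraph.connected_iff_exists_forall_reachable _).2 ⟨h, fun y => ?_⟩
  rcases eq_or_ne y h with rfl | hy
  · rfl
  · exact (hadj y hy).symm.reachable

lemma simplifiedGraph_le_sfpGraph {α : ℝ} (hα : 0 ≤ α) {N : ℕ} {w : Fin N → ℝ}
    {u : Sym2 (Fin N) → ℝ} (hu : ∀ e, u e ≤ 1 - exp (-(Real.log N ^ 2))) :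
    simplifiedGraph α N w ≤ sfpGraph α N w u := by
  intro x y hxy
  obtain ⟨hne, hrel⟩ := (SimpleGraph.fromRel_adj _ _ _).1 hxy
  have hthr : (N : ℝ) ^ α * Real.log N ^ 2 ≤ w x * w y := by
    rcases hrel with h | h
    · exact h
    · rwa [mul_comm (w x)]
  refine (SimpleGraph.fromRel_adj _ _ _).2 ⟨hne, Or.inl ?_⟩
  rcases (one_le_torusDist hne).eq_or_lt with hd | hd
  · exact Or.inl hd.symm
  refine Or.inr ⟨hd, (hu _).trans ?_⟩
  have hdN : ((torusDist N x y : ℕ) : ℝ) ≤ N := by exact_mod_cast torusDist_le N x y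
  set d : ℝ := (torusDist N x y : ℝ)
  have hd0 : 0 < d ^ α := rpow_pos_of_pos (by positivity) α
  have hdαN : d ^ α ≤ (N : ℝ) ^ α := rpow_le_rpow (by positivity) hdN hα
  have hlog : Real.log N ^ 2 ≤ w x * w y * (d ^ α)⁻¹ := by
    rw [← div_eq_mul_inv, le_div_iff₀ hd0]
    nlinarith [sq_nonneg (Real.log N)]
  have := exp_le_exp.2 (neg_le_neg hlog)
  rw [neg_mul]
  linarith

namespace SFPData

variable {a t : ℝ} {K : ℕ} {Ω : Type*} [MeasurableSpace Ω] {P : Measure Ω}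
  (D : SFPData a t K P)

lemma aemeasurable_W (x : Fin K) : AEMeasurable (D.W x) P := by
  by_contra hx
  have := (D.paretoW x).1
  rw [Measure.map_of_not_aemeasurable hx] at this
  exact IsProbabilityMeasure.ne_zero (0 : Measure ℝ) rfl

lemma aemeasurable_U (e : Sym2 (Fin K)) : AEMeasurable (D.U e) P := by
  by_contra he
  have := D.uniformU e
  rw [Measure.map_of_not_aemeasurable he] at this
  have := congrArg (· Set.univ) this
  simp [Real.volume_Icc] at this

lemma measure_W_lt (x : Fin K) {c : ℝ} (hc : 1 ≤ c) :
    P {ω | D.W x ω < c} = ENNReal.ofReal (1 - c ^ (-(t - 1))) := by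
  obtain ⟨hprob, htail, -⟩ := D.paretoW x
  have hIci : P.map (D.W x) (Set.Ici c) = ENNReal.ofReal (c ^ (-(t - 1))) := htail c hc
  have : P.map (D.W x) (Set.Iio c) = ENNReal.ofReal (1 - c ^ (-(t - 1))) := by
    rw [← Set.compl_Ici, measure_compl measurableSet_Ici (measure_ne_top _ _), measure_univ,
      hIci, ← ENNReal.ofReal_one, ← ENNReal.ofReal_sub _ (by positivity)]
  rwa [Measure.map_apply_of_aemeasurable (D.aemeasurable_W x) measurableSet_Iio] at this

lemma measure_forall_W_lt_le {c : ℝ} (hc : 1 ≤ c) :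
    P {ω | ∀ x, D.W x ω < c} ≤ ENNReal.ofReal (exp (-(K * c ^ (-(t - 1))))) := by
  have hindep : iIndepFun D.W P := D.indep.precomp (g := Sum.inl) Sum.inl_injective
  have hset : {ω | ∀ x, D.W x ω < c} = ⋂ x ∈ Finset.univ, D.W x ⁻¹' Set.Iio c := by
    ext; simp
  rw [hset, hindep.measure_inter_preimage_eq_mul _ fun _ _ => measurableSet_Iio,
    neg_mul_eq_mul_neg, exp_nat_mul, ENNReal.ofReal_pow (exp_pos _).le]
  refine (Finset.prod_le_prod' fun x _ => ?_).trans_eq (Fin.prod_const K _)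
  exact (D.measure_W_lt x hc).trans_le (ENNReal.ofReal_le_ofReal (one_sub_le_exp_neg _))

lemma measure_exists_U_gt_le (ε : ℝ) :
    P {ω | ∃ e, 1 - ε < D.U e ω} ≤ Fintype.card (Sym2 (Fin K)) * ENNReal.ofReal ε := by
  have hset : {ω | ∃ e, 1 - ε < D.U e ω} = ⋃ e, D.U e ⁻¹' Set.Ioi (1 - ε) := by
    ext; simp
  have hU : ∀ e, P (D.U e ⁻¹' Set.Ioi (1 - ε)) ≤ ENNReal.ofReal ε := fun e => by
    rw [← Measure.map_apply_of_aemeasurable (D.aemeasurable_U e) measurableSet_Ioi,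
      D.uniformU e, Measure.restrict_apply measurableSet_Ioi]
    calc volume (Set.Ioi (1 - ε) ∩ Set.Icc 0 1) ≤ volume (Set.Ioc (1 - ε) 1) :=
          measure_mono fun z hz => ⟨hz.1, hz.2.2⟩
      _ = ENNReal.ofReal ε := by rw [Real.volume_Ioc, sub_sub_cancel]
  rw [hset]
  calc P (⋃ e, D.U e ⁻¹' Set.Ioi (1 - ε)) ≤ ∑ e, P (D.U e ⁻¹' Set.Ioi (1 - ε)) :=
        measure_iUnion_fintype_le P _
    _ ≤ ∑ _e : Sym2 (Fin K), ENNReal.ofReal ε := Finset.sum_le_sum fun e _ => hU e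
    _ = Fintype.card (Sym2 (Fin K)) * ENNReal.ofReal ε := by
        rw [Finset.sum_const, nsmul_eq_mul, Finset.card_univ]

lemma measure_exists_W_lt_one : P {ω | ∃ x, D.W x ω < 1} = 0 := by
  have hset : {ω | ∃ x, D.W x ω < 1} = ⋃ x, D.W x ⁻¹' Set.Iio 1 := by
    ext; simp
  rw [hset, measure_iUnion_null_iff]
  intro x
  rw [← Measure.map_apply_of_aemeasurable (D.aemeasurable_W x) measurableSet_Iio]
  exact (D.paretoW x).2.2

def badEvent (c ε : ℝ) : Set Ω :=
  {ω | ∀ x, D.W x ω < c} ∪ {ω | ∃ e, 1 - ε < D.U e ω} ∪ {ω | ∃ x, D.W x ω < 1}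

lemma measureReal_badEvent_le {c ε : ℝ} (hc : 1 ≤ c) (hε : 0 ≤ ε) :
    P.real (D.badEvent c ε) ≤
      exp (-(K * c ^ (-(t - 1)))) + Fintype.card (Sym2 (Fin K)) * ε := by
  refine ENNReal.toReal_le_of_le_ofReal (by positivity) ?_
  calc P (D.badEvent c ε)
      ≤ P {ω | ∀ x, D.W x ω < c} + P {ω | ∃ e, 1 - ε < D.U e ω} +
          P {ω | ∃ x, D.W x ω < 1} :=
        (measure_union_le _ _).trans (add_le_add_left (measure_union_le _ _) _)
    _ ≤ ENNReal.ofReal (exp (-(K * c ^ (-(t - 1))))) +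
          Fintype.card (Sym2 (Fin K)) * ENNReal.ofReal ε + 0 := by
        gcongr
        · exact D.measure_forall_W_lt_le hc
        · exact D.measure_exists_U_gt_le ε
        · exact D.measure_exists_W_lt_one.le
    _ = ENNReal.ofReal (exp (-(K * c ^ (-(t - 1)))) + Fintype.card (Sym2 (Fin K)) * ε) := by
        rw [add_zero, ENNReal.ofReal_add (exp_pos _).le (by positivity),
          ENNReal.ofReal_mul (by positivity), ENNReal.ofReal_natCast]

lemma connected_and_le_graph_of_notMem_badEvent (ha : 0 ≤ a) {ω : Ω}
    (hω : ω ∉ D.badEvent ((K : ℝ) ^ a * Real.log K ^ 2) (exp (-(Real.log K ^ 2)))) :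
    (simplifiedGraph a K fun x => D.W x ω).Connected ∧
      simplifiedGraph a K (fun x => D.W x ω) ≤ D.graph ω := by
  simp only [badEvent, Set.mem_union, Set.mem_ofPred_eq, not_or, not_forall, not_exists,
    not_lt] at hω
  obtain ⟨⟨⟨h, hh⟩, hU⟩, hW⟩ := hω
  exact ⟨simplifiedGraph_connected_of_hub hW hh, simplifiedGraph_le_sfpGraph ha hU⟩

end SFPData

theorem sfp_simplified_connected_and_subgraph_general
    {α τ : ℝ} (hα : 0 < α) (hγ : α * (τ - 1) < 1)
    {Ω : Type*} [MeasurableSpace Ω] (P : Measure Ω) [IsProbabilityMeasure P]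
    (M : SFPModel α τ P) :
    ∀ᵐ ω ∂P, ∃ N₀ : ℕ, ∀ N : ℕ, N₀ ≤ N →
      (M.sgraph N ω).Connected ∧ M.sgraph N ω ≤ M.graph N ω := by
  have hbound : ∀ᶠ N : ℕ in atTop,
      P.real ((M N).badEvent ((N : ℝ) ^ α * Real.log N ^ 2) (exp (-(Real.log N ^ 2)))) ≤
        exp (-(N * ((N : ℝ) ^ α * Real.log N ^ 2) ^ (-(τ - 1)))) +
          Fintype.card (Sym2 (Fin N)) * exp (-(Real.log N ^ 2)) := by
    filter_upwards [tendsto_natCast_atTop_atTop.eventually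
      (tendsto_log_atTop.eventually_ge_atTop 1), eventually_ge_atTop 1] with N hL hN
    have hc : 1 ≤ (N : ℝ) ^ α * Real.log N ^ 2 :=
      one_le_mul_of_one_le_of_one_le (one_le_rpow (by exact_mod_cast hN) hα.le) (one_le_pow₀ hL)
    exact (M N).measureReal_badEvent_le hc (exp_pos _).le
  have hsum := (summable_exp_neg_mul_rpow_mul_log_sq_rpow_neg hγ).add
    summable_card_sym2_mul_exp_neg_log_sq
  filter_upwards [ae_eventually_notMem_of_summable hsum hbound] with ω hω
  obtain ⟨N₀, hN₀⟩ := eventually_atTop.1 hω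
  exact ⟨N₀, fun N hN => (M N).connected_and_le_graph_of_notMem_badEvent hα.le (hN₀ N hN)⟩

/-- If `γ = α(τ-1) < 1`, then almost surely, for all `N` large
enough, the simplified graph `\overline{G}_N` is connected and every edge of
`\overline{G}_N` is an edge of `G_N`. -/
theorem sfp_simplified_connected_and_subgraph
    {α τ : ℝ} (hα : 0 < α) (hτ : 1 < τ) (hγ : α * (τ - 1) < 1)
    {Ω : Type*} [MeasurableSpace Ω] (P : Measure Ω) [IsProbabilityMeasure P]
    (M : SFPModel α τ P) :
    ∀ᵐ ω ∂P, ∃ N₀ : ℕ, ∀ N : ℕ, N₀ ≤ N →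
      (M.sgraph N ω).Connected ∧ M.sgraph N ω ≤ M.graph N ω :=
  sfp_simplified_connected_and_subgraph_general hα hγ P M
end
end

section
/- Let W_x and W_y be independent random variables with Pareto law P(W ≥ t) = t^{−(τ−1)} for t ≥ 1 (τ > 1), let α > 0, γ := α(τ−1), and let d be an integer with d > 1. Then E[ 1 − exp(−W_x W_y d^{−α}) ] ≤ c · d^{−α} if τ > 2, and E[ 1 − exp(−W_x W_y d^{−α}) ] ≤ c · d^{−γ} (log d)² if τ ≤ 2, where c > 0 is a constant depending only on α and τ. -/
open MeasureTheory ProbabilityTheory Real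
open scoped ENNReal

noncomputable section

open Set

/-!
Since `1 - e^{-z} ≤ z^β` for `β ∈ (0, 1]`, independence gives
`E[1 - exp(-W_x W_y a)] ≤ a^β (E[W^β])²`, and the layer-cake formula gives
`E[W^β] = (τ-1)/(τ-1-β)` for `β < τ - 1`. For `τ > 2` take `β = 1`. For `τ ≤ 2` take
`β = τ - 1 - δ` with `δ = (τ-1)/(1 + log d)`: then
`d^{-αβ} = d^{-γ} d^{αδ} ≤ e^α d^{-γ}` because `δ log d ≤ 1`, and `E[W^β] = 1 + log d`.
-/

lemma one_sub_exp_neg_le_rpow {z β : ℝ} (hz : 0 ≤ z) (hβ0 : 0 < β) (hβ1 : β ≤ 1) :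
    1 - exp (-z) ≤ z ^ β := by
  rcases le_or_gt z 1 with hz1 | hz1
  · calc 1 - exp (-z) ≤ z := by linarith [add_one_le_exp (-z)]
      _ = z ^ (1 : ℝ) := (rpow_one z).symm
      _ ≤ z ^ β := rpow_le_rpow_of_exponent_ge' hz hz1 hβ0.le hβ1
  · linarith [exp_pos (-z), one_le_rpow hz1.le hβ0.le]

lemma rpow_mul_le_exp_of_mul_log_le {d s α : ℝ} (hd : 0 < d) (hα : 0 ≤ α)
    (hs : s * log d ≤ 1) : d ^ (α * s) ≤ exp α := by
  rw [rpow_def_of_pos hd, exp_le_exp]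
  nlinarith

namespace IsParetoLaw

variable {τ β : ℝ} {μ : Measure ℝ}

lemma ae_one_le (h : IsParetoLaw τ μ) : ∀ᵐ w ∂μ, 1 ≤ w := by
  rw [ae_iff]
  simpa only [not_le] using h.2.2

lemma measure_le_rpow (h : IsParetoLaw τ μ) (hβ : 0 < β) {t : ℝ} (ht : 1 ≤ t) :
    μ {w | t ≤ w ^ β} = ENNReal.ofReal (t ^ (-((τ - 1) / β))) := by
  have ht0 : 0 ≤ t := by linarith
  have hset : {w : ℝ | t ≤ w ^ β} =ᵐ[μ] {w | t ^ β⁻¹ ≤ w} := by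
    rw [Filter.eventuallyEq_set]
    filter_upwards [h.ae_one_le] with w hw
    exact (rpow_inv_le_iff_of_pos ht0 (by linarith) hβ).symm
  rw [measure_congr hset, h.2.1 _ (one_le_rpow ht (inv_nonneg.mpr hβ.le)), ← rpow_mul ht0]
  congr 2
  field_simp

lemma lintegral_rpow (h : IsParetoLaw τ μ) (hβ : 0 < β) (hβτ : β < τ - 1) :
    ∫⁻ w, ENNReal.ofReal (w ^ β) ∂μ = ENNReal.ofReal ((τ - 1) / (τ - 1 - β)) := by
  have := h.1
  have hgap : 0 < τ - 1 - β := by linarith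
  have hexp : -((τ - 1) / β) < -1 := neg_lt_neg ((one_lt_div hβ).mpr hβτ)
  have hlow : ∫⁻ t in Ioc (0 : ℝ) 1, μ {w | t ≤ w ^ β} = 1 := by
    have hfull : ∀ t ∈ Ioc (0 : ℝ) 1, μ {w | t ≤ w ^ β} = 1 := fun t ht =>
      le_antisymm prob_le_one <| by
        calc (1 : ℝ≥0∞) = μ {w | 1 ≤ w ^ β} := by simp [h.measure_le_rpow hβ le_rfl]
          _ ≤ μ {w | t ≤ w ^ β} := measure_mono fun w hw => ht.2.trans hw
    simp [setLIntegral_congr_fun measurableSet_Ioc hfull]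
  have htail :
      ∫⁻ t in Ioi (1 : ℝ), μ {w | t ≤ w ^ β} = ENNReal.ofReal (β / (τ - 1 - β)) := by
    rw [setLIntegral_congr_fun measurableSet_Ioi fun t ht => h.measure_le_rpow hβ (le_of_lt ht),
      ← ofReal_integral_eq_lintegral_ofReal (integrableOn_Ioi_rpow_of_lt hexp one_pos)
        (ae_restrict_of_forall_mem measurableSet_Ioi fun t ht =>
          rpow_nonneg (zero_le_one.trans (le_of_lt ht)) _),
      integral_Ioi_rpow_of_lt hexp one_pos, one_rpow,
      show -((τ - 1) / β) + 1 = -((τ - 1 - β) / β) by field_simp; ring, neg_div_neg_eq,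
      one_div_div]
  rw [lintegral_eq_lintegral_meas_le μ (h.ae_one_le.mono fun w hw => rpow_nonneg (by linarith) β)
      (by fun_prop), ← Ioc_union_Ioi_eq_Ioi zero_le_one,
    lintegral_union measurableSet_Ioi Ioc_disjoint_Ioi_same, hlow, htail,
    ← ENNReal.ofReal_one, ← ENNReal.ofReal_add zero_le_one (by positivity)]
  congr 1
  field_simp
  ring

lemma integrable_rpow (h : IsParetoLaw τ μ) (hβ : 0 < β) (hβτ : β < τ - 1) :
    Integrable (fun w => w ^ β) μ := by
  refine ⟨by fun_prop, ?_⟩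
  rw [hasFiniteIntegral_iff_ofReal (h.ae_one_le.mono fun w hw => rpow_nonneg (by linarith) β),
    h.lintegral_rpow hβ hβτ]
  exact ENNReal.ofReal_lt_top

lemma integral_rpow (h : IsParetoLaw τ μ) (hβ : 0 < β) (hβτ : β < τ - 1) :
    ∫ w, w ^ β ∂μ = (τ - 1) / (τ - 1 - β) := by
  rw [integral_eq_lintegral_of_nonneg_ae
      (h.ae_one_le.mono fun w hw => rpow_nonneg (by linarith) β) (by fun_prop),
    h.lintegral_rpow hβ hβτ, ENNReal.toReal_ofReal (div_nonneg (by linarith) (by linarith))]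

variable {Ω : Type*} [MeasurableSpace Ω] {P : Measure Ω} {X : Ω → ℝ}

lemma aemeasurable_of_map (h : IsParetoLaw τ (P.map X)) : AEMeasurable X P := by
  by_contra hX
  have := h.1.measure_univ
  simp [Measure.map_of_not_aemeasurable hX] at this

lemma ae_one_le_of_map (h : IsParetoLaw τ (P.map X)) : ∀ᵐ ω ∂P, 1 ≤ X ω :=
  ae_of_ae_map h.aemeasurable_of_map h.ae_one_le

lemma integrable_rpow_comp (h : IsParetoLaw τ (P.map X)) (hβ : 0 < β) (hβτ : β < τ - 1) :
    Integrable (fun ω => X ω ^ β) P :=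
  (integrable_map_measure (by fun_prop) h.aemeasurable_of_map).mp (h.integrable_rpow hβ hβτ)

lemma integral_rpow_comp (h : IsParetoLaw τ (P.map X)) (hβ : 0 < β) (hβτ : β < τ - 1) :
    ∫ ω, X ω ^ β ∂P = (τ - 1) / (τ - 1 - β) := by
  rw [← integral_map (f := fun w => w ^ β) h.aemeasurable_of_map (by fun_prop),
    h.integral_rpow hβ hβτ]

end IsParetoLaw

lemma integral_one_sub_exp_neg_mul_le {Ω : Type*} [MeasurableSpace Ω] {P : Measure Ω}
    {τ β a : ℝ} {X Y : Ω → ℝ} (hXY : IndepFun X Y P)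
    (hX : IsParetoLaw τ (P.map X)) (hY : IsParetoLaw τ (P.map Y))
    (hβ0 : 0 < β) (hβ1 : β ≤ 1) (hβτ : β < τ - 1) (ha : 0 ≤ a) :
    ∫ ω, (1 - exp (-(X ω * Y ω) * a)) ∂P ≤ a ^ β * ((τ - 1) / (τ - 1 - β)) ^ 2 := by
  have hindep : IndepFun (fun ω => X ω ^ β) (fun ω => Y ω ^ β) P :=
    hXY.comp (φ := fun x => x ^ β) (ψ := fun y => y ^ β) (by fun_prop) (by fun_prop)
  have hXβ := hX.integrable_rpow_comp hβ0 hβτ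
  have hYβ := hY.integrable_rpow_comp hβ0 hβτ
  have hint : Integrable (fun ω => a ^ β * (X ω ^ β * Y ω ^ β)) P :=
    (hindep.integrable_mul hXβ hYβ).const_mul _
  have hpoint : ∀ᵐ ω ∂P, 0 ≤ 1 - exp (-(X ω * Y ω) * a) ∧
      1 - exp (-(X ω * Y ω) * a) ≤ a ^ β * (X ω ^ β * Y ω ^ β) := by
    filter_upwards [hX.ae_one_le_of_map, hY.ae_one_le_of_map] with ω hx hy
    have hz : 0 ≤ X ω * Y ω * a := by positivity
    rw [neg_mul]
    refine ⟨by simpa using exp_le_one_iff.mpr (neg_nonpos.mpr hz), ?_⟩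
    calc 1 - exp (-(X ω * Y ω * a)) ≤ (X ω * Y ω * a) ^ β :=
          one_sub_exp_neg_le_rpow hz hβ0 hβ1
      _ = a ^ β * (X ω ^ β * Y ω ^ β) := by
        rw [mul_rpow (by positivity) ha, mul_rpow (by positivity) (by positivity)]
        ring
  calc ∫ ω, (1 - exp (-(X ω * Y ω) * a)) ∂P
      ≤ ∫ ω, a ^ β * (X ω ^ β * Y ω ^ β) ∂P :=
        integral_mono_of_nonneg (hpoint.mono fun _ h => h.1) hint (hpoint.mono fun _ h => h.2)
    _ = a ^ β * ((τ - 1) / (τ - 1 - β)) ^ 2 := by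
      rw [integral_const_mul, hindep.integral_fun_mul_eq_mul_integral hXβ.1 hYβ.1,
        hX.integral_rpow_comp hβ0 hβτ, hY.integral_rpow_comp hβ0 hβτ, sq]

section LinkProbability

variable {Ω : Type*} [MeasurableSpace Ω] {P : Measure Ω} {α τ : ℝ} {X Y : Ω → ℝ}

lemma integral_one_sub_exp_neg_le_of_two_lt (hτ2 : 2 < τ) (hXY : IndepFun X Y P)
    (hX : IsParetoLaw τ (P.map X)) (hY : IsParetoLaw τ (P.map Y)) {d : ℝ} (hd : 0 < d) :
    ∫ ω, (1 - exp (-(X ω * Y ω) * (d ^ α)⁻¹)) ∂P ≤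
      ((τ - 1) / (τ - 2)) ^ 2 * d ^ (-α) := by
  have hbound := integral_one_sub_exp_neg_mul_le hXY hX hY one_pos le_rfl (by linarith)
    (inv_nonneg.mpr (rpow_nonneg hd.le α))
  rw [rpow_neg hd.le]
  rwa [rpow_one, show τ - 1 - 1 = τ - 2 by ring, mul_comm] at hbound

lemma integral_one_sub_exp_neg_le_of_le_two (hα : 0 ≤ α) (hτ : 1 < τ) (hτ2 : τ ≤ 2)
    (hXY : IndepFun X Y P) (hX : IsParetoLaw τ (P.map X)) (hY : IsParetoLaw τ (P.map Y))
    {d : ℝ} (hd : 2 ≤ d) :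
    ∫ ω, (1 - exp (-(X ω * Y ω) * (d ^ α)⁻¹)) ∂P ≤
      exp α * (1 + (log 2)⁻¹) ^ 2 * d ^ (-(α * (τ - 1))) * log d ^ 2 := by
  have hd0 : 0 < d := by linarith
  set L := log d
  have hL2 : log 2 ≤ L := log_le_log two_pos hd
  have hL : 0 < L := (log_pos one_lt_two).trans_le hL2
  set δ := (τ - 1) / (1 + L)
  have hδ : 0 < δ := by positivity
  have hδτ : δ < τ - 1 := div_lt_self (by linarith) (by linarith)
  have hδL : δ * L ≤ 1 := by
    rw [div_mul_eq_mul_div, div_le_one (by positivity)]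
    nlinarith
  have hbound := integral_one_sub_exp_neg_mul_le (β := τ - 1 - δ) hXY hX hY
    (by linarith) (by linarith) (by linarith) (inv_nonneg.mpr (rpow_nonneg hd0.le α))
  have hpow : (d ^ α)⁻¹ ^ (τ - 1 - δ) = d ^ (-(α * (τ - 1))) * d ^ (α * δ) := by
    rw [← rpow_neg hd0.le, ← rpow_mul hd0.le, ← rpow_add hd0]
    ring_nf
  have hmoment : (τ - 1) / (τ - 1 - (τ - 1 - δ)) = 1 + L := by
    rw [sub_sub_cancel, div_div_cancel₀ (by linarith)]
  have hlog : 1 + L ≤ (1 + (log 2)⁻¹) * L := by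
    have : 1 ≤ (log 2)⁻¹ * L := by
      rwa [inv_mul_eq_div, one_le_div (log_pos one_lt_two)]
    linarith
  rw [hpow, hmoment] at hbound
  calc _ ≤ _ := hbound
    _ ≤ d ^ (-(α * (τ - 1))) * exp α * ((1 + (log 2)⁻¹) * L) ^ 2 := by
      gcongr
      exact rpow_mul_le_exp_of_mul_log_le hd0 hα hδL
    _ = exp α * (1 + (log 2)⁻¹) ^ 2 * d ^ (-(α * (τ - 1))) * L ^ 2 := by ring

end LinkProbability

/-- Let `W_x, W_y` be independent Pareto(τ-1) random variables,
`α > 0`, `γ = α(τ-1)`, and `d > 1` an integer. Then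
`E[1 - exp(-W_x W_y d^{-α})] ≤ c d^{-α}` if `τ > 2` and
`E[1 - exp(-W_x W_y d^{-α})] ≤ c d^{-γ} (log d)²` if `τ ≤ 2`, where `c > 0` depends
only on `α` and `τ`. -/
theorem sfp_link_probability_bound (α τ : ℝ) (hα : 0 < α) (hτ : 1 < τ) :
    ∃ c : ℝ, 0 < c ∧
      ∀ (Ω : Type) (_ : MeasurableSpace Ω) (P : Measure Ω),
        IsProbabilityMeasure P →
        ∀ X Y : Ω → ℝ, IndepFun X Y P →
          IsParetoLaw τ (P.map X) → IsParetoLaw τ (P.map Y) →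
          ∀ d : ℕ, 1 < d →
            (2 < τ →
              (∫ ω, (1 - Real.exp (-(X ω * Y ω) * ((d : ℝ) ^ α)⁻¹)) ∂P) ≤
                c * (d : ℝ) ^ (-α)) ∧
            (τ ≤ 2 →
              (∫ ω, (1 - Real.exp (-(X ω * Y ω) * ((d : ℝ) ^ α)⁻¹)) ∂P) ≤
                c * (d : ℝ) ^ (-(α * (τ - 1))) * Real.log d ^ 2) := by
  refine ⟨((τ - 1) / (τ - 2)) ^ 2 + exp α * (1 + (log 2)⁻¹) ^ 2, by positivity, ?_⟩
  intro Ω _ P _ X Y hXY hX hY d hd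
  have hd2 : (2 : ℝ) ≤ d := by exact_mod_cast hd
  refine ⟨fun hτ2 => ?_, fun hτ2 => ?_⟩
  · refine (integral_one_sub_exp_neg_le_of_two_lt hτ2 hXY hX hY (by linarith)).trans ?_
    gcongr
    exact le_add_of_nonneg_right (by positivity)
  · refine (integral_one_sub_exp_neg_le_of_le_two hα.le hτ hτ2 hXY hX hY hd2).trans ?_
    gcongr
    exact le_add_of_nonneg_left (sq_nonneg _)

end
end

section
/- Let (X_N)_{N∈ℕ} be a sequence of random variables (possibly on different probability spaces) such that for every ε > 0, P(X_N > N^{ε}) → 0 as N → ∞. Then there exists a slowly varying function ℓ : ℕ → (0,∞) such that P(X_N > ℓ(N)) → 0 as N → ∞. -/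
/-!
Fix thresholds beyond which `P(X_N > N^{1/(k+1)}) ≤ 1/(k+1)`; a diagonal index `κ N → ∞` that
passes them gives `P(X_N > N^{1/(κ N+1)}) → 0`. With `ε m = 1/(κ(2^m)+1)`, decreasing to `0`, put
`ℓ N = 2^(ε 0 + ⋯ + ε m)` for `2^m ≤ N < 2^(m+1)`. As `ε` decreases, the exponent is at least
`(m+1) ε m`, so `ℓ N ≥ N^(ε m)`. As `Nat.log 2 ⌊s N⌋` stays within bounded distance of
`Nat.log 2 N` and the increments `ε m` of the exponent tend to `0`, `ℓ ⌊s N⌋ / ℓ N → 1`.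
-/

open MeasureTheory Filter Topology Finset

open scoped ENNReal

/-- `ℓ : ℕ → (0, ∞)` is slowly varying: for every `s > 0`, `ℓ(⌊s n⌋)/ℓ(n) → 1`. -/
def SlowlyVarying (ℓ : ℕ → ℝ) : Prop :=
  ∀ s : ℝ, 0 < s →
    Filter.Tendsto (fun n : ℕ => ℓ ⌊s * (n : ℝ)⌋₊ / ℓ n) Filter.atTop (nhds 1)

theorem Nat.log_le_log_add_of_le_mul_pow {b x y : ℕ} (hb : 1 < b) {c : ℕ}
    (h : x ≤ y * b ^ c) : Nat.log b x ≤ Nat.log b y + c := by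
  refine Nat.lt_succ_iff.1 (Nat.log_lt_of_lt_pow' (by omega) ?_)
  calc x ≤ y * b ^ c := h
    _ < b ^ (Nat.log b y + 1) * b ^ c := by
      gcongr
      exact Nat.lt_pow_succ_log_self hb y
    _ = b ^ (Nat.log b y + c + 1) := by ring

theorem Nat.tendsto_log_atTop {b : ℕ} (hb : 1 < b) : Tendsto (Nat.log b) atTop atTop :=
  tendsto_atTop_atTop.2 fun m => ⟨b ^ m, fun _ hn => Nat.le_log_of_pow_le hb hn⟩

theorem Nat.exists_log_two_floor_mul_near {s : ℝ} (hs : 0 < s) :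
    ∃ c : ℕ, ∀ᶠ n : ℕ in atTop,
      Nat.log 2 ⌊s * n⌋₊ ≤ Nat.log 2 n + c ∧ Nat.log 2 n ≤ Nat.log 2 ⌊s * n⌋₊ + c := by
  obtain ⟨c, hc⟩ := pow_unbounded_of_one_lt (max s (2 / s)) one_lt_two
  have hsc : s ≤ 2 ^ c := (le_max_left _ _).trans hc.le
  have hsc' : 2 ≤ s * 2 ^ c := by
    have := (le_max_right _ _).trans hc.le
    rwa [div_le_iff₀ hs, mul_comm] at this
  refine ⟨c, ?_⟩
  filter_upwards [eventually_ge_atTop (2 ^ c)] with n hn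
  have hnR : (2 : ℝ) ^ c ≤ n := by exact_mod_cast hn
  have hn0 : n ≠ 0 := (Nat.two_pow_pos c).trans_le hn |>.ne'
  have hup : ⌊s * n⌋₊ ≤ n * 2 ^ c := Nat.floor_le_of_le (by push_cast; nlinarith)
  have hlow : n ≤ ⌊s * n⌋₊ * 2 ^ c := by
    have hfloor := Nat.lt_floor_add_one (s * n)
    have : (n : ℝ) ≤ ⌊s * n⌋₊ * 2 ^ c := by nlinarith [pow_pos (two_pos (α := ℝ)) c]
    exact_mod_cast this
  have hfloor0 : ⌊s * n⌋₊ ≠ 0 := by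
    rintro h0
    rw [h0, zero_mul] at hlow
    omega
  exact ⟨Nat.log_le_log_add_of_le_mul_pow one_lt_two hup,
    Nat.log_le_log_add_of_le_mul_pow one_lt_two hlow⟩

theorem tendsto_add_sub_of_tendsto_succ_sub {f : ℕ → ℝ}
    (hf : Tendsto (fun m => f (m + 1) - f m) atTop (𝓝 0)) (c : ℕ) :
    Tendsto (fun m => f (m + c) - f m) atTop (𝓝 0) := by
  induction c with
  | zero => simp
  | succ c ih =>
    have := (hf.comp (tendsto_add_atTop_nat c)).add ih
    rw [add_zero] at this
    refine this.congr fun m => ?_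
    simp only [Function.comp_apply, ← add_assoc]
    ring

theorem Monotone.tendsto_comp_sub_comp {f : ℕ → ℝ} (hmono : Monotone f)
    (hf : Tendsto (fun m => f (m + 1) - f m) atTop (𝓝 0)) {α : Type*} {l : Filter α}
    {a b : α → ℕ} {c : ℕ} (hb : Tendsto b l atTop)
    (hab : ∀ᶠ x in l, a x ≤ b x + c ∧ b x ≤ a x + c) :
    Tendsto (fun x => f (a x) - f (b x)) l (𝓝 0) := by
  have hwindow : Tendsto (fun x => f (b x - c + 2 * c) - f (b x - c)) l (𝓝 0) :=
    (tendsto_add_sub_of_tendsto_succ_sub hf (2 * c)).comp ((tendsto_sub_atTop_nat c).comp hb)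
  refine squeeze_zero_norm' ?_ hwindow
  filter_upwards [hab] with x ⟨hax, hbx⟩
  have h₁ := hmono (show b x - c ≤ a x by omega)
  have h₂ := hmono (show a x ≤ b x - c + 2 * c by omega)
  have h₃ := hmono (show b x - c ≤ b x by omega)
  have h₄ := hmono (show b x ≤ b x - c + 2 * c by omega)
  rw [Real.norm_eq_abs, abs_le]
  constructor <;> linarith

theorem slowlyVarying_rpow_comp_log {f : ℕ → ℝ} (hmono : Monotone f)
    (hf : Tendsto (fun m => f (m + 1) - f m) atTop (𝓝 0)) {b : ℝ} (hb : 0 < b) :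
    SlowlyVarying fun n => b ^ f (Nat.log 2 n) := by
  intro s hs
  obtain ⟨c, hc⟩ := Nat.exists_log_two_floor_mul_near hs
  have hgap := hmono.tendsto_comp_sub_comp hf (Nat.tendsto_log_atTop one_lt_two) hc
  have hlim := (Real.continuousAt_const_rpow hb.ne').tendsto.comp hgap
  rw [Real.rpow_zero] at hlim
  exact hlim.congr fun n => Real.rpow_sub hb _ _

theorem slowlyVarying_two_rpow_sum_range {ε : ℕ → ℝ} (hε0 : ∀ i, 0 ≤ ε i)
    (hε : Tendsto ε atTop (𝓝 0)) :
    SlowlyVarying fun N => (2 : ℝ) ^ ∑ i ∈ range (Nat.log 2 N + 1), ε i := by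
  refine slowlyVarying_rpow_comp_log (f := fun m => ∑ i ∈ range (m + 1), ε i)
    (monotone_nat_of_le_succ fun m => ?_) ?_ two_pos
  · rw [sum_range_succ _ (m + 1)]
    linarith [hε0 (m + 1)]
  · simpa only [sum_range_succ_sub_sum, Function.comp_def] using hε.comp (tendsto_add_atTop_nat 1)

theorem rpow_le_two_rpow_sum_range {ε : ℕ → ℝ} (hε : Antitone ε) (hε0 : ∀ i, 0 ≤ ε i) (N : ℕ) :
    (N : ℝ) ^ ε (Nat.log 2 N) ≤ (2 : ℝ) ^ ∑ i ∈ range (Nat.log 2 N + 1), ε i := by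
  set m := Nat.log 2 N
  have hN : (N : ℝ) ≤ 2 ^ (m + 1) := by
    exact_mod_cast (Nat.lt_pow_succ_log_self one_lt_two N).le
  have hsum : ((m + 1 : ℕ) : ℝ) * ε m ≤ ∑ i ∈ range (m + 1), ε i := by
    simpa using card_nsmul_le_sum (range (m + 1)) ε (ε m)
      fun i hi => hε (Nat.lt_succ_iff.1 (mem_range.1 hi))
  calc (N : ℝ) ^ ε m ≤ ((2 : ℝ) ^ (m + 1)) ^ ε m := Real.rpow_le_rpow (by positivity) hN (hε0 m)
    _ = 2 ^ (((m + 1 : ℕ) : ℝ) * ε m) := (Real.rpow_natCast_mul zero_le_two _ _).symm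
    _ ≤ 2 ^ ∑ i ∈ range (m + 1), ε i := Real.rpow_le_rpow_of_exponent_le one_le_two hsum

theorem exists_monotone_tendsto_forall_le_thresholds (M : ℕ → ℕ) :
    ∃ κ : ℕ → ℕ, Monotone κ ∧ Tendsto κ atTop atTop ∧ ∀ᶠ n in atTop, ∀ i ≤ κ n, M i ≤ n := by
  refine ⟨fun n => Nat.findGreatest (fun j => ∀ i ≤ j, M i ≤ n) n,
    fun n n' h => Nat.findGreatest_mono (fun j hj i hi => (hj i hi).trans h) h, ?_, ?_⟩
  · refine tendsto_atTop_atTop.2 fun b => ⟨max b ((range (b + 1)).sup M), fun n hn => ?_⟩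
    refine Nat.le_findGreatest (le_of_max_le_left hn) fun i hi => ?_
    exact (le_sup (mem_range.2 (Nat.lt_succ_of_le hi))).trans (le_of_max_le_right hn)
  · filter_upwards [eventually_ge_atTop (M 0)] with n hn
    exact Nat.findGreatest_spec (P := fun j => ∀ i ≤ j, M i ≤ n) (Nat.zero_le n) fun i hi => by rwa [Nat.le_zero.1 hi]

theorem ENNReal.exists_tendsto_diagonal {u : ℕ → ℕ → ℝ≥0∞}
    (hu : ∀ k, Tendsto (u k) atTop (𝓝 0)) :
    ∃ κ : ℕ → ℕ, Monotone κ ∧ Tendsto κ atTop atTop ∧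
      Tendsto (fun n => u (κ n) n) atTop (𝓝 0) := by
  have hthreshold : ∀ k, ∃ M, ∀ n ≥ M, u k n ≤ ((k + 1 : ℕ) : ℝ≥0∞)⁻¹ := fun k =>
    ENNReal.tendsto_atTop_zero.1 (hu k) _ (ENNReal.inv_pos.2 (ENNReal.natCast_ne_top _))
  choose M hM using hthreshold
  obtain ⟨κ, hκ_mono, hκ_top, hκ⟩ := exists_monotone_tendsto_forall_le_thresholds M
  refine ⟨κ, hκ_mono, hκ_top, tendsto_of_tendsto_of_tendsto_of_le_of_le' tendsto_const_nhds
    (ENNReal.tendsto_inv_nat_nhds_zero.comp ((tendsto_add_atTop_nat 1).comp hκ_top))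
    (Eventually.of_forall fun _ => zero_le) ?_⟩
  filter_upwards [hκ] with n hn
  exact hM _ _ (hn _ le_rfl)

theorem exists_slowly_varying_dominating_general
    (Ω : ℕ → Type) (mΩ : ∀ N, MeasurableSpace (Ω N)) (P : ∀ N, Measure (Ω N))
    (X : ∀ N, Ω N → ℝ)
    (h : ∀ ε : ℝ, 0 < ε →
      Filter.Tendsto (fun N : ℕ => P N {ω | (N : ℝ) ^ ε < X N ω})
        Filter.atTop (nhds 0)) :
    ∃ ℓ : ℕ → ℝ, (∀ n, 0 < ℓ n) ∧ SlowlyVarying ℓ ∧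
      Filter.Tendsto (fun N : ℕ => P N {ω | ℓ N < X N ω})
        Filter.atTop (nhds 0) := by
  obtain ⟨κ, hκ_mono, hκ_top, hκ⟩ :=
    ENNReal.exists_tendsto_diagonal fun k : ℕ => h ((k : ℝ) + 1)⁻¹ (by positivity)
  set ε : ℕ → ℝ := fun m => ((κ (2 ^ m) : ℝ) + 1)⁻¹
  have hε0 : ∀ m, 0 ≤ ε m := fun m => by positivity
  have hε_anti : Antitone ε := fun m m' hm => by
    simp only [ε]
    gcongr
    exact hκ_mono (Nat.pow_le_pow_right two_pos hm)
  have hε_lim : Tendsto ε atTop (𝓝 0) :=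
    tendsto_inv_atTop_zero.comp <| tendsto_atTop_add_const_right _ 1 <|
      tendsto_natCast_atTop_atTop.comp <| hκ_top.comp <| tendsto_pow_atTop_atTop_of_one_lt one_lt_two
  refine ⟨fun N => (2 : ℝ) ^ ∑ i ∈ range (Nat.log 2 N + 1), ε i, fun N => by positivity,
    slowlyVarying_two_rpow_sum_range hε0 hε_lim,
    tendsto_of_tendsto_of_tendsto_of_le_of_le' tendsto_const_nhds hκ
      (Eventually.of_forall fun _ => zero_le) ?_⟩
  filter_upwards [eventually_ge_atTop 1] with N hN
  have hdom : (N : ℝ) ^ ((κ N : ℝ) + 1)⁻¹ ≤ 2 ^ ∑ i ∈ range (Nat.log 2 N + 1), ε i :=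
    calc (N : ℝ) ^ ((κ N : ℝ) + 1)⁻¹ ≤ (N : ℝ) ^ ε (Nat.log 2 N) := by
          refine Real.rpow_le_rpow_of_exponent_le (by exact_mod_cast hN) ?_
          simp only [ε]
          gcongr
          exact hκ_mono (Nat.pow_log_le_self 2 (by omega))
      _ ≤ _ := rpow_le_two_rpow_sum_range hε_anti hε0 N
  exact measure_mono fun ω (hω : _ < _) => hdom.trans_lt hω

/-- If `(X_N)` is a sequence of random variables (possibly on
different probability spaces) with `P(X_N > N^ε) → 0` for every `ε > 0`, then there
is a slowly varying `ℓ : ℕ → (0,∞)` with `P(X_N > ℓ(N)) → 0`. -/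
theorem exists_slowly_varying_dominating
    (Ω : ℕ → Type) (mΩ : ∀ N, MeasurableSpace (Ω N)) (P : ∀ N, Measure (Ω N))
    (hP : ∀ N, IsProbabilityMeasure (P N)) (X : ∀ N, Ω N → ℝ)
    (h : ∀ ε : ℝ, 0 < ε →
      Filter.Tendsto (fun N : ℕ => P N {ω | (N : ℝ) ^ ε < X N ω})
        Filter.atTop (nhds 0)) :
    ∃ ℓ : ℕ → ℝ, (∀ n, 0 < ℓ n) ∧ SlowlyVarying ℓ ∧
      Filter.Tendsto (fun N : ℕ => P N {ω | ℓ N < X N ω})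
        Filter.atTop (nhds 0) :=
  exists_slowly_varying_dominating_general Ω mΩ P X h
end
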